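/- arXiv:1306.0026 — 2 statements merged into one kernel-verified Lean document; each statement's English description precedes it below -/
import Mathlib

section
/- In intuitionistic propositional logic extended with contractual implication (PCL), for all propositions p and q, the formula ((p ↠ q) ∧ (q ↠ p)) → (p ∧ q) is provable, where ↠ is governed by: (↠I1) from Δ ⊢ q infer Δ ⊢ p ↠ q; (↠E) from Δ ⊢ p ↠ q and Δ, q ⊢ p infer Δ ⊢ q (together with the standard intuitionistic rules). -/
/-- Formulae of Propositional Contract Logic over atoms `A`. -/
inductive PCLForm (A : Type) : Type
  | atom : A → PCLForm A
  | top  : PCLForm A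
  | and  : PCLForm A → PCLForm A → PCLForm A
  | imp  : PCLForm A → PCLForm A → PCLForm A
  | cimp : PCLForm A → PCLForm A → PCLForm A

/-- Natural deduction for PCL: intuitionistic rules plus (↠I1), (↠I2), (↠E). -/
inductive PCLProves {A : Type} : Set (PCLForm A) → PCLForm A → Prop
  | ax {Δ p} : p ∈ Δ → PCLProves Δ p
  | topI {Δ} : PCLProves Δ .top
  | andI {Δ p q} : PCLProves Δ p → PCLProves Δ q → PCLProves Δ (.and p q)
  | andE1 {Δ p q} : PCLProves Δ (.and p q) → PCLProves Δ p
  | andE2 {Δ p q} : PCLProves Δ (.and p q) → PCLProves Δ q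
  | impI {Δ p q} : PCLProves (insert p Δ) q → PCLProves Δ (.imp p q)
  | impE {Δ p q} : PCLProves Δ (.imp p q) → PCLProves Δ p → PCLProves Δ q
  | cimpI1 {Δ p q} : PCLProves Δ q → PCLProves Δ (.cimp p q)
  | cimpI2 {Δ p q p' q'} : PCLProves Δ (.cimp p' q') → PCLProves (insert p Δ) p' →
      PCLProves (insert q' Δ) (.cimp p q) → PCLProves Δ (.cimp p q)
  | cimpE {Δ p q} : PCLProves Δ (.cimp p q) → PCLProves (insert q Δ) p → PCLProves Δ q

lemma pcl_aux {A : Type} (p q : PCLForm A) (Δ : Set (PCLForm A))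
    (h : PCLForm.and (.cimp p q) (.cimp q p) ∈ Δ) :
    PCLProves Δ (.and p q) := by
  have hpq : ∀ Δ' : Set (PCLForm A), (PCLForm.and (.cimp p q) (.cimp q p)) ∈ Δ' →
      PCLProves Δ' (PCLForm.cimp p q) := fun Δ' h' => .andE1 (.ax h')
  have hqp : ∀ Δ' : Set (PCLForm A), (PCLForm.and (.cimp p q) (.cimp q p)) ∈ Δ' →
      PCLProves Δ' (PCLForm.cimp q p) := fun Δ' h' => .andE2 (.ax h')
  have hq : ∀ Δ' : Set (PCLForm A), (PCLForm.and (.cimp p q) (.cimp q p)) ∈ Δ' →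
      PCLProves Δ' q := by
    intro Δ' h'
    exact .cimpE (hpq Δ' h')
      (.cimpE (hqp _ (Set.mem_insert_of_mem _ h')) (.ax (Set.mem_insert_of_mem _ (Set.mem_insert _ _))))
  have hp : PCLProves Δ p :=
    .cimpE (hqp Δ h) (hq _ (Set.mem_insert_of_mem _ h))
  exact .andI hp (hq Δ h)

/-- ((p ↠ q) ∧ (q ↠ p)) → (p ∧ q) is a theorem of PCL. -/
theorem pcl_handshake {A : Type} (p q : PCLForm A) :
    PCLProves (∅ : Set (PCLForm A))
      (.imp (.and (.cimp p q) (.cimp q p)) (.and p q)) := by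
  exact .impI (pcl_aux p q _ (Set.mem_insert _ _))
end

section
/- Let Δ★ = {(e₀ ∧ e₁) ↠ e₆, e₆ → e₃, e₆ → e₄, e₃ → e₀, (e₄ ∧ e₅) ↠ e₇, e₇ → e₁, e₇ → e₂, e₂ → e₅} over atoms e₀,…,e₇. Then Δ★ ⊢ eᵢ in PCL for every i ∈ {0,…,7}. -/
/-- The double-diamond Horn PCL theory Δ★ over atoms 0,…,7. -/
def DeltaStar : Set (PCLForm ℕ) :=
  { .cimp (.and (.atom 0) (.atom 1)) (.atom 6),
    .imp (.atom 6) (.atom 3),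
    .imp (.atom 6) (.atom 4),
    .imp (.atom 3) (.atom 0),
    .cimp (.and (.atom 4) (.atom 5)) (.atom 7),
    .imp (.atom 7) (.atom 1),
    .imp (.atom 7) (.atom 2),
    .imp (.atom 2) (.atom 5) }

theorem PCLProves.weaken {A : Type} {Δ Δ' : Set (PCLForm A)} {p : PCLForm A}
    (h : PCLProves Δ p) (hsub : Δ ⊆ Δ') : PCLProves Δ' p := by
  induction h generalizing Δ' with
  | ax hmem => exact .ax (hsub hmem)
  | topI => exact .topI
  | andI _ _ ih1 ih2 => exact .andI (ih1 hsub) (ih2 hsub)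
  | andE1 _ ih => exact .andE1 (ih hsub)
  | andE2 _ ih => exact .andE2 (ih hsub)
  | impI _ ih => exact .impI (ih (Set.insert_subset_insert hsub))
  | impE _ _ ih1 ih2 => exact .impE (ih1 hsub) (ih2 hsub)
  | cimpI1 _ ih => exact .cimpI1 (ih hsub)
  | cimpI2 _ _ _ ih1 ih2 ih3 =>
      exact .cimpI2 (ih1 hsub) (ih2 (Set.insert_subset_insert hsub))
        (ih3 (Set.insert_subset_insert hsub))
  | cimpE _ _ ih1 ih2 => exact .cimpE (ih1 hsub) (ih2 (Set.insert_subset_insert hsub))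

namespace DeltaStarProof

private def e (n : ℕ) : PCLForm ℕ := .atom n

lemma mem1 : PCLForm.cimp (.and (e 0) (e 1)) (e 6) ∈ DeltaStar := by simp [DeltaStar, e]
lemma mem2 : PCLForm.imp (e 6) (e 3) ∈ DeltaStar := by simp [DeltaStar, e]
lemma mem3 : PCLForm.imp (e 6) (e 4) ∈ DeltaStar := by simp [DeltaStar, e]
lemma mem4 : PCLForm.imp (e 3) (e 0) ∈ DeltaStar := by simp [DeltaStar, e]
lemma mem5 : PCLForm.cimp (.and (e 4) (e 5)) (e 7) ∈ DeltaStar := by simp [DeltaStar, e]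
lemma mem6 : PCLForm.imp (e 7) (e 1) ∈ DeltaStar := by simp [DeltaStar, e]
lemma mem7 : PCLForm.imp (e 7) (e 2) ∈ DeltaStar := by simp [DeltaStar, e]
lemma mem8 : PCLForm.imp (e 2) (e 5) ∈ DeltaStar := by simp [DeltaStar, e]

/-- In any context containing Δ★ and e6, we can prove e7 via (↠E). -/
lemma h7of6 {Γ : Set (PCLForm ℕ)} (hΔ : DeltaStar ⊆ Γ) (hx6 : PCLProves Γ (e 6)) :
    PCLProves Γ (e 7) := by
  apply PCLProves.cimpE (.ax (hΔ mem5))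
  have hΔ' : DeltaStar ⊆ insert (e 7) Γ := hΔ.trans (Set.subset_insert _ _)
  have hx7 : PCLProves (insert (e 7) Γ) (e 7) := .ax (Set.mem_insert _ _)
  exact .andI (.impE (.ax (hΔ' mem3)) (hx6.weaken (Set.subset_insert _ _)))
    (.impE (.ax (hΔ' mem8)) (.impE (.ax (hΔ' mem7)) hx7))

lemma h6 : PCLProves DeltaStar (e 6) := by
  apply PCLProves.cimpE (.ax mem1)
  have hΔ : DeltaStar ⊆ insert (e 6) DeltaStar := Set.subset_insert _ _
  have hx6 : PCLProves (insert (e 6) DeltaStar) (e 6) := .ax (Set.mem_insert _ _)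
  have h0 : PCLProves (insert (e 6) DeltaStar) (e 0) :=
    .impE (.ax (hΔ mem4)) (.impE (.ax (hΔ mem2)) hx6)
  exact .andI h0 (.impE (.ax (hΔ mem6)) (h7of6 hΔ hx6))

lemma h3 : PCLProves DeltaStar (e 3) := .impE (.ax mem2) h6
lemma h4 : PCLProves DeltaStar (e 4) := .impE (.ax mem3) h6
lemma h0 : PCLProves DeltaStar (e 0) := .impE (.ax mem4) h3
lemma h7 : PCLProves DeltaStar (e 7) := h7of6 (subset_refl _) h6
lemma h1 : PCLProves DeltaStar (e 1) := .impE (.ax mem6) h7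
lemma h2 : PCLProves DeltaStar (e 2) := .impE (.ax mem7) h7
lemma h5 : PCLProves DeltaStar (e 5) := .impE (.ax mem8) h2

end DeltaStarProof

/-- Δ★ ⊢ eᵢ for every i ∈ {0,…,7}. -/
theorem deltaStar_proves_all : ∀ i : ℕ, i ≤ 7 → PCLProves DeltaStar (.atom i) := by
  intro i hi
  interval_cases i
  · exact DeltaStarProof.h0
  · exact DeltaStarProof.h1
  · exact DeltaStarProof.h2
  · exact DeltaStarProof.h3
  · exact DeltaStarProof.h4
  · exact DeltaStarProof.h5
  · exact DeltaStarProof.h6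
  · exact DeltaStarProof.h7
end
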